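/- Let p ∈ ℂ be nonzero and n ≥ 1 an integer. The ℂ[∂]-linear map B(p) → B(np) sending L_i ↦ (1/n)L'_{ni} is an injective homomorphism of Lie conformal algebras, i.e., it preserves λ-brackets. -/
import Mathlib


open MvPolynomial

/-- `B(q)` as a `ℂ[∂]`-module: families `ℕ →₀ ℂ[∂]` of coefficients on the basis `{L_i}`. -/
abbrev BlockAlg := ℕ →₀ Polynomial ℂ

/-- Elements of `ℂ[∂,λ] ⊗ B(q)` on the basis `{L_i}`, with `∂ = X 0`, `λ = X 1`. -/
abbrev BlockElt := ℕ →₀ MvPolynomial (Fin 2) ℂ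

/-- `[L_i λ L_j] = ((i+q)∂ + (i+j+2q)λ) L_{i+j}` in `B(q)`. -/
noncomputable def blockBracket (q : ℂ) (i j : ℕ) : BlockElt :=
  Finsupp.single (i + j)
    (C ((i : ℂ) + q) * X 0 + C ((i : ℂ) + (j : ℂ) + 2 * q) * X 1)

/-- The `ℂ[∂]`-linear map `B(p) → B(np)`, `L_i ↦ (1/n) L'_{n i}`. -/
noncomputable def embed (n : ℕ) : BlockAlg →ₗ[Polynomial ℂ] BlockAlg :=
  (((n : ℂ)⁻¹ : ℂ) • LinearMap.id).comp
    (Finsupp.lmapDomain (Polynomial ℂ) (Polynomial ℂ) (fun i => n * i))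

/-- The same map on `ℂ[∂,λ] ⊗ B(p)` (used to transport the values of the λ-bracket). -/
noncomputable def embedL (n : ℕ) (x : BlockElt) : BlockElt :=
  ((n : ℂ)⁻¹ : ℂ) • Finsupp.mapDomain (fun i => n * i) x

/-- For `p ≠ 0` and `n ≥ 1`, the map `L_i ↦ (1/n) L'_{n i}` is an injective homomorphism
of Lie conformal algebras `B(p) → B(np)`: it is an injective `ℂ[∂]`-module map, and it
sends `[L_i λ L_j]` to the bracket of the images,
`[(1/n)L'_{ni} λ (1/n)L'_{nj}] = (1/n)² [L'_{ni} λ L'_{nj}]` in `B(np)`. -/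
theorem embed_injective_hom (p : ℂ) (hp : p ≠ 0) (n : ℕ) (hn : 1 ≤ n) :
    Function.Injective (embed n) ∧
    ∀ i j : ℕ, embedL n (blockBracket p i j)
      = (((n : ℂ)⁻¹ * (n : ℂ)⁻¹) : ℂ) • blockBracket (n * p) (n * i) (n * j) := by
  have hn0 : (n : ℂ) ≠ 0 := Nat.cast_ne_zero.mpr (by omega)
  have hninv : ((n : ℂ)⁻¹ : ℂ) ≠ 0 := inv_ne_zero hn0
  constructor
  · intro x y hxy
    simp only [embed, LinearMap.comp_apply, LinearMap.smul_apply, LinearMap.id_apply,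
      Finsupp.lmapDomain_apply] at hxy
    have h2 := smul_right_injective BlockAlg hninv hxy
    exact Finsupp.mapDomain_injective (fun a b h => Nat.eq_of_mul_eq_mul_left (by omega) h) h2
  · intro i j
    unfold embedL blockBracket
    rw [Finsupp.mapDomain_single]
    rw [Finsupp.smul_single, Finsupp.smul_single]
    congr 1
    · ring
    · rw [smul_eq_C_mul, smul_eq_C_mul, mul_add, mul_add, ← mul_assoc, ← mul_assoc,
        ← mul_assoc, ← mul_assoc, ← C_mul, ← C_mul, ← C_mul, ← C_mul]
      congr 2 <;> (push_cast; field_simp)
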